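/- arXiv:1907.08517 — 4 statements merged into one kernel-verified Lean document; each statement's English description precedes it below -/
import Mathlib

section
/- The map W ↦ D_W sending a graphon to its degree distribution is 2-Lipschitz from the space of graphons equipped with the cut distance δ_□ to the space of Borel probability measures on [0,1] equipped with the Wasserstein distance. -/
open MeasureTheory

/-- The degree function of a graphon representative `w`. -/
noncomputable def graphonDeg (w : ℝ → ℝ → ℝ) (u : ℝ) : ℝ :=
  ∫ v in Set.Icc (0:ℝ) 1, w u v

/-- The Wasserstein distance between the degree distributions of two graphon
representatives `w, w'` (pushforwards of Lebesgue measure on `[0,1]` by the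
degree functions), expressed by duality as the supremum over 1-Lipschitz test
functions. -/
noncomputable def degDistDist (w w' : ℝ → ℝ → ℝ) : ℝ :=
  sSup {d : ℝ | ∃ f : ℝ → ℝ, LipschitzWith 1 f ∧
    d = |(∫ u in Set.Icc (0:ℝ) 1, f (graphonDeg w u)) -
         (∫ u in Set.Icc (0:ℝ) 1, f (graphonDeg w' u))|}

/-- The cut norm of the difference `w - w'`. -/
noncomputable def cutDist (w w' : ℝ → ℝ → ℝ) : ℝ :=
  sSup {c : ℝ | ∃ S T : Set ℝ, MeasurableSet S ∧ MeasurableSet T ∧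
    c = |∫ u in S ∩ Set.Icc (0:ℝ) 1, ∫ v in T ∩ Set.Icc (0:ℝ) 1, (w u v - w' u v)|}

section aux

variable {w w' : ℝ → ℝ → ℝ}

private lemma aux_finite (T : Set ℝ) (hT : T ⊆ Set.Icc (0:ℝ) 1) : volume T < ⊤ :=
  lt_of_le_of_lt (measure_mono hT) (by simp)

/-- sections are integrable on subsets of `[0,1]`. -/
private lemma aux_sec (hm : Measurable (Function.uncurry w))
    (hr : ∀ x y, w x y ∈ Set.Icc (0:ℝ) 1) (u : ℝ) {T : Set ℝ}
    (hT : T ⊆ Set.Icc (0:ℝ) 1) : IntegrableOn (w u) T := by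
  haveI : IsFiniteMeasure (volume.restrict T) :=
    ⟨by rw [Measure.restrict_apply_univ]; exact aux_finite T hT⟩
  refine Integrable.mono' (integrable_const 1) (hm.of_uncurry_left).aestronglyMeasurable ?_
  filter_upwards with v
  rw [Real.norm_eq_abs, abs_le]
  exact ⟨by linarith [(hr u v).1], (hr u v).2⟩

private lemma aux_diff_sec (hm : Measurable (Function.uncurry w))
    (hm' : Measurable (Function.uncurry w'))
    (hr : ∀ x y, w x y ∈ Set.Icc (0:ℝ) 1) (hr' : ∀ x y, w' x y ∈ Set.Icc (0:ℝ) 1)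
    (u : ℝ) {T : Set ℝ} (hT : T ⊆ Set.Icc (0:ℝ) 1) :
    IntegrableOn (fun v => w u v - w' u v) T :=
  (aux_sec hm hr u hT).sub (aux_sec hm' hr' u hT)

/-- measurability of the partial cut integral. -/
private lemma aux_F_meas (hm : Measurable (Function.uncurry w))
    (hm' : Measurable (Function.uncurry w')) (T : Set ℝ) :
    Measurable (fun u => ∫ v in T, (w u v - w' u v)) := by
  have h : StronglyMeasurable (Function.uncurry (fun u v => w u v - w' u v)) := by
    have : Measurable (fun p : ℝ × ℝ => w p.1 p.2 - w' p.1 p.2) := hm.sub hm'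
    exact this.stronglyMeasurable
  exact (h.integral_prod_right (ν := volume.restrict T)).measurable

/-- pointwise bound on the partial cut integral. -/
private lemma aux_F_bound (hm : Measurable (Function.uncurry w))
    (hm' : Measurable (Function.uncurry w'))
    (hr : ∀ x y, w x y ∈ Set.Icc (0:ℝ) 1) (hr' : ∀ x y, w' x y ∈ Set.Icc (0:ℝ) 1)
    (u : ℝ) {T : Set ℝ} (hTm : MeasurableSet T) (hT : T ⊆ Set.Icc (0:ℝ) 1) :
    |∫ v in T, (w u v - w' u v)| ≤ 1 := by
  have h := norm_setIntegral_le_of_norm_le_const (μ := volume)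
      (f := fun v => w u v - w' u v) (C := 1) (aux_finite T hT) ?_
  · rw [Real.norm_eq_abs] at h
    refine h.trans ?_
    rw [one_mul]
    have h1 : volume T ≤ 1 := by
      have := measure_mono (μ := volume) hT
      simpa using this
    have := ENNReal.toReal_mono (by simp) h1
    simpa [measureReal_def] using this
  · intro v _
    rw [Real.norm_eq_abs, abs_le]
    constructor
    · show -1 ≤ w u v - w' u v
      linarith [(hr u v).1, (hr' u v).2]
    · show w u v - w' u v ≤ 1
      linarith [(hr u v).2, (hr' u v).1]

end aux

/-- The map sending a graphon to its degree distribution is 2-Lipschitz from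
the cut distance to the Wasserstein distance:  for any two graphon
representatives `w, w'` (symmetric measurable functions `[0,1]² → [0,1]`),
`d_Wass(D_W, D_{W'}) ≤ 2 ‖w - w'‖_□`.  (Taking infima over representatives
gives `d_Wass(D_W, D_{W'}) ≤ 2 δ_□(W, W')`.) -/
theorem stmt12 (w w' : ℝ → ℝ → ℝ)
    (hmw : Measurable (Function.uncurry w)) (hmw' : Measurable (Function.uncurry w'))
    (hsym : ∀ x y, w x y = w y x) (hsym' : ∀ x y, w' x y = w' y x)
    (hrange : ∀ x y, w x y ∈ Set.Icc (0:ℝ) 1)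
    (hrange' : ∀ x y, w' x y ∈ Set.Icc (0:ℝ) 1) :
    degDistDist w w' ≤ 2 * cutDist w w' := by
  set I : Set ℝ := Set.Icc (0:ℝ) 1 with hIdef
  have hIm : MeasurableSet I := measurableSet_Icc
  have hIsub : I ⊆ I := le_refl I
  -- the difference of degrees, as a single integral
  set F : ℝ → ℝ := fun u => ∫ v in I, (w u v - w' u v) with hFdef
  have hFmeas : Measurable F := aux_F_meas hmw hmw' I
  have hFeq : ∀ u, graphonDeg w u - graphonDeg w' u = F u := by
    intro u
    rw [hFdef]
    simp only [graphonDeg]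
    rw [← integral_sub (aux_sec hmw hrange u hIsub) (aux_sec hmw' hrange' u hIsub)]
  have hFbd : ∀ u, |F u| ≤ 1 := fun u => aux_F_bound hmw hmw' hrange hrange' u hIm hIsub
  -- bddAbove of the cut set and nonnegativity of cutDist
  have hcutBdd : BddAbove {c : ℝ | ∃ S T : Set ℝ, MeasurableSet S ∧ MeasurableSet T ∧
      c = |∫ u in S ∩ I, ∫ v in T ∩ I, (w u v - w' u v)|} := by
    refine ⟨1, ?_⟩
    rintro c ⟨S, T, hS, hT, rfl⟩
    have hsub : S ∩ I ⊆ I := Set.inter_subset_right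
    have h := norm_setIntegral_le_of_norm_le_const (μ := volume)
        (f := fun u => ∫ v in T ∩ I, (w u v - w' u v)) (C := 1)
        (aux_finite _ hsub) ?_
    · rw [Real.norm_eq_abs] at h
      refine h.trans ?_
      rw [one_mul]
      have h1 : volume (S ∩ I) ≤ 1 := by
        refine (measure_mono (μ := volume) hsub).trans ?_
        rw [hIdef]
        simp
      have := ENNReal.toReal_mono (by simp) h1
      simpa [measureReal_def] using this
    · intro u _
      rw [Real.norm_eq_abs]
      exact aux_F_bound hmw hmw' hrange hrange' u (hT.inter hIm) Set.inter_subset_right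
  have hcut0 : 0 ≤ cutDist w w' := by
    have hmem : (0:ℝ) ∈ {c : ℝ | ∃ S T : Set ℝ, MeasurableSet S ∧ MeasurableSet T ∧
        c = |∫ u in S ∩ I, ∫ v in T ∩ I, (w u v - w' u v)|} := by
      refine ⟨∅, ∅, MeasurableSet.empty, MeasurableSet.empty, ?_⟩
      simp
    exact le_csSup hcutBdd hmem
  -- membership bound: any signed cut integral is at most cutDist
  have hcutLe : ∀ S : Set ℝ, MeasurableSet S → |∫ u in S ∩ I, F u| ≤ cutDist w w' := by
    intro S hS
    refine le_csSup hcutBdd ?_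
    refine ⟨S, Set.univ, hS, MeasurableSet.univ, ?_⟩
    rw [Set.univ_inter]
  -- key estimate : ∫ |F| ≤ 2 * cutDist
  have hkey : (∫ u in I, |F u|) ≤ 2 * cutDist w w' := by
    set S : Set ℝ := {u | 0 ≤ F u} with hSdef
    have hSm : MeasurableSet S := measurableSet_le measurable_const hFmeas
    have hFint : ∀ T : Set ℝ, T ⊆ I → IntegrableOn F T := by
      intro T hT
      haveI : IsFiniteMeasure (volume.restrict T) :=
        ⟨by rw [Measure.restrict_apply_univ]; exact aux_finite T hT⟩
      refine Integrable.mono' (integrable_const 1) hFmeas.aestronglyMeasurable ?_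
      filter_upwards with u
      rw [Real.norm_eq_abs]
      exact hFbd u
    have habsint : ∀ T : Set ℝ, T ⊆ I → IntegrableOn (fun u => |F u|) T := by
      intro T hT
      exact (hFint T hT).abs
    have hdisj : Disjoint (S ∩ I) (Sᶜ ∩ I) :=
      Set.disjoint_of_subset Set.inter_subset_left Set.inter_subset_left disjoint_compl_right
    have hsplit : (∫ u in I, |F u|) =
        (∫ u in S ∩ I, |F u|) + (∫ u in Sᶜ ∩ I, |F u|) := by
      have hU : (S ∩ I) ∪ (Sᶜ ∩ I) = I := by
        rw [← Set.union_inter_distrib_right, Set.union_compl_self, Set.univ_inter]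
      have h := setIntegral_union (f := fun u => |F u|) (μ := volume) hdisj
        (hSm.compl.inter hIm) (habsint _ Set.inter_subset_right)
        (habsint _ Set.inter_subset_right)
      rw [hU] at h
      exact h
    have h1 : (∫ u in S ∩ I, |F u|) ≤ cutDist w w' := by
      have he : (∫ u in S ∩ I, |F u|) = ∫ u in S ∩ I, F u := by
        refine setIntegral_congr_fun (hSm.inter hIm) ?_
        intro u hu
        exact abs_of_nonneg hu.1
      rw [he]
      exact (le_abs_self _).trans (hcutLe S hSm)
    have h2 : (∫ u in Sᶜ ∩ I, |F u|) ≤ cutDist w w' := by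
      have he : (∫ u in Sᶜ ∩ I, |F u|) = ∫ u in Sᶜ ∩ I, -F u := by
        refine setIntegral_congr_fun (hSm.compl.inter hIm) ?_
        intro u hu
        exact abs_of_nonpos (le_of_lt (by simpa [hSdef] using hu.1))
      rw [he, integral_neg]
      exact (neg_le_abs _).trans (hcutLe Sᶜ hSm.compl)
    calc (∫ u in I, |F u|) = _ + _ := hsplit
    _ ≤ cutDist w w' + cutDist w w' := add_le_add h1 h2
    _ = 2 * cutDist w w' := by ring
  -- finish : every element of the Wasserstein sup set is ≤ 2 * cutDist
  refine Real.sSup_le ?_ (by linarith)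
  rintro d ⟨f, hf, rfl⟩
  -- integrability of f ∘ deg on I
  haveI : IsFiniteMeasure (volume.restrict I) :=
    ⟨by rw [Measure.restrict_apply_univ]; exact aux_finite I hIsub⟩
  have hdegm : ∀ (v : ℝ → ℝ → ℝ), Measurable (Function.uncurry v) →
      Measurable (graphonDeg v) := by
    intro v hv
    exact (hv.stronglyMeasurable.integral_prod_right
      (ν := volume.restrict (Set.Icc (0:ℝ) 1))).measurable
  have hdegbd : ∀ (v : ℝ → ℝ → ℝ), Measurable (Function.uncurry v) →
      (∀ x y, v x y ∈ Set.Icc (0:ℝ) 1) → ∀ u, |graphonDeg v u| ≤ 1 := by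
    intro v hv hr u
    have h0 : ∀ x y, v x y - 0 = v x y := fun x y => sub_zero _
    have := aux_F_bound (w := v) (w' := fun _ _ => 0) hv measurable_const hr
      (fun x y => by simp) u measurableSet_Icc (le_refl _)
    simpa [graphonDeg] using this
  have hcomp : ∀ (v : ℝ → ℝ → ℝ), Measurable (Function.uncurry v) →
      (∀ x y, v x y ∈ Set.Icc (0:ℝ) 1) →
      IntegrableOn (fun u => f (graphonDeg v u)) I := by
    intro v hv hr
    refine Integrable.mono' (integrable_const (|f 0| + 1))
      (hf.continuous.measurable.comp (hdegm v hv)).aestronglyMeasurable ?_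
    filter_upwards with u
    rw [Real.norm_eq_abs]
    have h1 : |f (graphonDeg v u) - f 0| ≤ |graphonDeg v u| := by
      have := hf.dist_le_mul (graphonDeg v u) 0
      simpa [Real.dist_eq] using this
    calc |f (graphonDeg v u)| = |(f (graphonDeg v u) - f 0) + f 0| := by ring_nf
    _ ≤ |f (graphonDeg v u) - f 0| + |f 0| := abs_add_le _ _
    _ ≤ |graphonDeg v u| + |f 0| := by linarith
    _ ≤ |f 0| + 1 := by linarith [hdegbd v hv hr u]
  have hsub : (∫ u in I, f (graphonDeg w u)) - (∫ u in I, f (graphonDeg w' u)) =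
      ∫ u in I, (f (graphonDeg w u) - f (graphonDeg w' u)) := by
    rw [integral_sub (hcomp w hmw hrange) (hcomp w' hmw' hrange')]
  rw [hsub]
  refine le_trans ?_ hkey
  have habs := norm_integral_le_integral_norm (μ := volume.restrict I)
    (f := fun u => f (graphonDeg w u) - f (graphonDeg w' u))
  rw [Real.norm_eq_abs] at habs
  refine habs.trans ?_
  refine integral_mono_of_nonneg (Filter.Eventually.of_forall fun u => abs_nonneg _) ?_ ?_
  · refine Integrable.mono' (integrable_const 1) hFmeas.abs.aestronglyMeasurable ?_
    filter_upwards with u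
    rw [Real.norm_eq_abs, abs_abs]
    exact hFbd u
  · filter_upwards with u
    rw [Real.norm_eq_abs]
    have := hf.dist_le_mul (graphonDeg w u) (graphonDeg w' u)
    rw [← hFeq u]
    simpa [Real.dist_eq] using this
end

section
/- Let b be a {0,1}-decorated plane binary tree with n leaves, and let G = Cograph(b). For a leaf ℓ of b, define Φ(b,ℓ) = (b',ℓ) where b' is obtained by flipping the decorations of all ancestors of ℓ that contain ℓ in their right subtree. Define a total order on the leaves of b': ℓ < r iff their first common ancestor has decoration 0 when ℓ is in its left subtree (and decoration 1 when ℓ is in its right subtree). Then the degree in G of the vertex corresponding to ℓ equals rank_{b'}(ℓ) - 1, the number of leaves strictly smaller than ℓ in this order on b'. -/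
/-- Plane binary trees with `{0,1}`-decorated (`Bool`) internal nodes. -/
inductive BTree where
  | leaf : BTree
  | node : Bool → BTree → BTree → BTree

/-- number of leaves. -/
def BTree.nLeaves : BTree → ℕ
  | .leaf => 1
  | .node _ l r => l.nLeaves + r.nLeaves

/-- The leaves of `b`, identified by their root-to-leaf paths
(`false` = left child, `true` = right child), in left-to-right order. -/
def BTree.paths : BTree → List (List Bool)
  | .leaf => [[]]
  | .node _ l r => l.paths.map (false :: ·) ++ r.paths.map (true :: ·)

/-- The leaves of `b` listed in the total order associated with the
decorations: at a node decorated `0` the leaves of the left subtree are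
smaller, at a node decorated `1` the leaves of the right subtree are smaller. -/
def BTree.ordLeaves : BTree → List (List Bool)
  | .leaf => [[]]
  | .node b l r =>
      let L := l.ordLeaves.map (false :: ·)
      let R := r.ordLeaves.map (true :: ·)
      if b then R ++ L else L ++ R

/-- `Φ` : flip the decorations of all (proper) ancestors of the leaf at path
`p` that contain this leaf in their right subtree. -/
def BTree.flipPath : BTree → List Bool → BTree
  | .leaf, _ => .leaf
  | .node b l r, [] => .node b l r
  | .node b l r, (false :: p) => .node b (l.flipPath p) r
  | .node b l r, (true :: p) => .node (!b) l (r.flipPath p)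

/-- Degree, in the cograph `Cograph(b)`, of the vertex corresponding to the leaf
at path `p` : a leaf is adjacent to exactly the leaves lying in the other
subtree of each of its ancestors decorated `1`. -/
def BTree.degOf : BTree → List Bool → ℕ
  | .leaf, _ => 0
  | .node _ _ _, [] => 0
  | .node b l r, (false :: p) => (if b then r.nLeaves else 0) + l.degOf p
  | .node b l r, (true :: p) => (if b then l.nLeaves else 0) + r.degOf p

/-!
Induct on the tree. At an ancestor of `ℓ` decorated `d`, the leaves of the sibling subtree come
before `ℓ` in the order of `Φ(b, ℓ)` exactly when `d = 1`: if `ℓ` lies on the left this is the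
defining rule, and if it lies on the right the flip of `d` by `Φ` makes it so. These are
precisely the sibling leaves adjacent to `ℓ` in `Cograph(b)`.
-/

theorem List.idxOf_map_of_injective {α β : Type*} [BEq α] [LawfulBEq α] [BEq β] [LawfulBEq β]
    {f : α → β} (hf : Function.Injective f) (l : List α) (a : α) :
    (l.map f).idxOf (f a) = l.idxOf a := by
  induction l with
  | nil => rfl
  | cons x l ih => by_cases h : x = a <;> simp [hf.eq_iff, h, ih]

namespace BTree

theorem length_ordLeaves (b : BTree) : b.ordLeaves.length = b.nLeaves := by
  induction b with
  | leaf => rfl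
  | node d l r ihl ihr => cases d <;> simp [ordLeaves, nLeaves, ihl, ihr, Nat.add_comm]

theorem mem_ordLeaves {b : BTree} {p : List Bool} : p ∈ b.ordLeaves ↔ p ∈ b.paths := by
  induction b generalizing p with
  | leaf => rfl
  | node d l r ihl ihr => cases d <;> simp [ordLeaves, paths, ihl, ihr, or_comm]

theorem paths_flipPath (b : BTree) (p : List Bool) : (b.flipPath p).paths = b.paths := by
  induction b generalizing p with
  | leaf => rfl
  | node d l r ihl ihr =>
    rcases p with _ | ⟨_ | _, q⟩ <;> simp [flipPath, paths, ihl, ihr]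

theorem idxOf_ordLeaves_node_left {d : Bool} {l r : BTree} {q : List Bool} (hq : q ∈ l.paths) :
    (node d l r).ordLeaves.idxOf (false :: q) =
      (if d then r.nLeaves else 0) + l.ordLeaves.idxOf q := by
  have hmem : false :: q ∈ l.ordLeaves.map (false :: ·) :=
    List.mem_map_of_mem (mem_ordLeaves.2 hq)
  have hnot : false :: q ∉ r.ordLeaves.map (true :: ·) := by simp
  cases d
  · simp [ordLeaves, List.idxOf_append_of_mem hmem, List.idxOf_map_of_injective List.cons_injective]
  · simp [ordLeaves, List.idxOf_append_of_notMem hnot, length_ordLeaves,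
      List.idxOf_map_of_injective List.cons_injective]

theorem idxOf_ordLeaves_node_right {d : Bool} {l r : BTree} {q : List Bool} (hq : q ∈ r.paths) :
    (node d l r).ordLeaves.idxOf (true :: q) =
      (if d then 0 else l.nLeaves) + r.ordLeaves.idxOf q := by
  have hmem : true :: q ∈ r.ordLeaves.map (true :: ·) :=
    List.mem_map_of_mem (mem_ordLeaves.2 hq)
  have hnot : true :: q ∉ l.ordLeaves.map (false :: ·) := by simp
  cases d
  · simp [ordLeaves, List.idxOf_append_of_notMem hnot, length_ordLeaves,
      List.idxOf_map_of_injective List.cons_injective]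
  · simp [ordLeaves, List.idxOf_append_of_mem hmem, List.idxOf_map_of_injective List.cons_injective]

end BTree

/-- Let `b` be a `{0,1}`-decorated plane binary tree, `G = Cograph(b)`, `ℓ` a
leaf of `b` and `(b', ℓ) = Φ(b, ℓ)`.  Then the degree of (the vertex of) `ℓ`
in `G` equals `rank_{b'}(ℓ) - 1`, the number of leaves strictly smaller than
`ℓ` in the total order associated with `b'`. -/
theorem stmt13 (b : BTree) (p : List Bool) (hp : p ∈ b.paths) :
    b.degOf p = ((b.flipPath p).ordLeaves).idxOf p := by
  induction b generalizing p with
  | leaf =>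
    obtain rfl : p = [] := by simpa [BTree.paths] using hp
    rfl
  | node d l r ihl ihr =>
    simp only [BTree.paths, List.mem_append, List.mem_map] at hp
    rcases hp with ⟨q, hq, rfl⟩ | ⟨q, hq, rfl⟩
    · rw [BTree.flipPath, BTree.idxOf_ordLeaves_node_left (by rwa [BTree.paths_flipPath]), ← ihl q hq,
        BTree.degOf]
    · rw [BTree.flipPath, BTree.idxOf_ordLeaves_node_right (by rwa [BTree.paths_flipPath]), ← ihr q hq,
        BTree.degOf]
      cases d <;> rfl
end

section
/- Let b_n be a uniform random {0,1}-decorated plane binary tree with n leaves (decorations of the n-1 internal nodes being arbitrary, all such decorated trees equiprobable), and let v be a uniform random vertex of the cograph G = Cograph(b_n). Then deg_G(v) is uniformly distributed on {0, 1, …, n-1}. -/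
/-- Position of the leaf at path `p` in the order `ordLeaves`. -/
def BTree.idx : BTree → List Bool → ℕ
  | .leaf, _ => 0
  | .node _ _ _, [] => 0
  | .node b l r, (false :: p) => (if b then r.nLeaves else 0) + l.idx p
  | .node b l r, (true :: p) => (if b then 0 else l.nLeaves) + r.idx p

lemma flip_nLeaves : ∀ (t : BTree) (p : List Bool),
    (t.flipPath p).nLeaves = t.nLeaves
  | .leaf, _ => rfl
  | .node _ _ _, [] => rfl
  | .node b l r, (false :: p) => by
      simp [BTree.flipPath, BTree.nLeaves, flip_nLeaves l p]
  | .node b l r, (true :: p) => by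
      simp [BTree.flipPath, BTree.nLeaves, flip_nLeaves r p]

lemma flip_paths : ∀ (t : BTree) (p : List Bool),
    (t.flipPath p).paths = t.paths
  | .leaf, _ => rfl
  | .node _ _ _, [] => rfl
  | .node b l r, (false :: p) => by
      simp [BTree.flipPath, BTree.paths, flip_paths l p]
  | .node b l r, (true :: p) => by
      simp [BTree.flipPath, BTree.paths, flip_paths r p]

lemma flipPath_flip_flip : ∀ (t : BTree) (p : List Bool),
    (t.flipPath p).flipPath p = t
  | .leaf, _ => rfl
  | .node _ _ _, [] => rfl
  | .node b l r, (false :: p) => by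
      simp [BTree.flipPath, flipPath_flip_flip l p]
  | .node b l r, (true :: p) => by
      simp [BTree.flipPath, flipPath_flip_flip r p]

lemma deg_flip : ∀ (t : BTree) (p : List Bool),
    (t.flipPath p).degOf p = t.idx p
  | .leaf, _ => rfl
  | .node _ _ _, [] => rfl
  | .node b l r, (false :: p) => by
      simp [BTree.flipPath, BTree.degOf, BTree.idx, deg_flip l p]
  | .node b l r, (true :: p) => by
      cases b <;>
        simp [BTree.flipPath, BTree.degOf, BTree.idx, deg_flip r p]

lemma ord_length : ∀ (t : BTree), t.ordLeaves.length = t.nLeaves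
  | .leaf => rfl
  | .node b l r => by
      cases b <;>
        simp [BTree.ordLeaves, BTree.nLeaves, ord_length l, ord_length r,
          Nat.add_comm]

lemma ord_perm : ∀ (t : BTree), t.ordLeaves.Perm t.paths
  | .leaf => List.Perm.refl _
  | .node b l r => by
      have hl := (ord_perm l).map (false :: ·)
      have hr := (ord_perm r).map (true :: ·)
      cases b
      · simpa [BTree.ordLeaves, BTree.paths] using hl.append hr
      · simpa [BTree.ordLeaves, BTree.paths] using
          (List.perm_append_comm.trans (hl.append hr))

lemma idx_ord : ∀ (t : BTree) (i : ℕ) (h : i < t.ordLeaves.length),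
    t.idx (t.ordLeaves[i]) = i
  | .leaf, 0, _ => rfl
  | .node b l r, i, h => by
      cases b
      · simp only [BTree.ordLeaves, reduceIte, Bool.false_eq_true, ite_false] at h ⊢
        by_cases hi : i < (l.ordLeaves.map (false :: ·)).length
        · rw [List.getElem_append_left hi]
          rw [List.length_map] at hi
          simp [BTree.idx, idx_ord l i hi]
        · rw [List.getElem_append_right (Nat.le_of_not_lt hi)]
          push_neg at hi
          rw [List.length_map] at hi
          have h2 : i - l.ordLeaves.length < r.ordLeaves.length := by
            simp only [List.length_append, List.length_map] at h
            omega
          simp only [List.length_map, List.getElem_map]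
          simp [BTree.idx, idx_ord r _ h2, ← ord_length]
          omega
      · simp only [BTree.ordLeaves, reduceIte, Bool.false_eq_true, ite_false] at h ⊢
        by_cases hi : i < (r.ordLeaves.map (true :: ·)).length
        · rw [List.getElem_append_left hi]
          rw [List.length_map] at hi
          simp [BTree.idx, idx_ord r i hi]
        · rw [List.getElem_append_right (Nat.le_of_not_lt hi)]
          push_neg at hi
          rw [List.length_map] at hi
          have h2 : i - r.ordLeaves.length < l.ordLeaves.length := by
            simp only [List.length_append, List.length_map] at h
            omega
          simp only [List.length_map, List.getElem_map]
          simp [BTree.idx, idx_ord l _ h2, ← ord_length]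
          omega

/-- Let `b_n` be a uniform random `{0,1}`-decorated plane binary tree with `n`
leaves and `v` a uniform random vertex of `Cograph(b_n)`.  Then `deg(v)` is
uniform on `{0,…,n-1}` : for every `d < n`, the number of pairs (tree, leaf)
with degree `d` equals the number of trees. -/
theorem stmt14 (n : ℕ) (hn : 1 ≤ n) (d : ℕ) (hd : d < n) :
    Nat.card {tp : BTree × List Bool //
        tp.1.nLeaves = n ∧ tp.2 ∈ tp.1.paths ∧ tp.1.degOf tp.2 = d} =
      Nat.card {t : BTree // t.nLeaves = n} := by
  refine Nat.card_congr ?_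
  refine
    { toFun := fun tp => ⟨tp.1.1.flipPath tp.1.2, by
        rw [flip_nLeaves]; exact tp.2.1⟩
      invFun := fun t =>
        ⟨(t.1.flipPath (t.1.ordLeaves[d]'(by rw [ord_length, t.2]; exact hd)),
          t.1.ordLeaves[d]'(by rw [ord_length, t.2]; exact hd)), ?_, ?_, ?_⟩
      left_inv := ?_
      right_inv := ?_ }
  · rw [flip_nLeaves]; exact t.2
  · rw [flip_paths]
    exact (ord_perm t.1).mem_iff.mp (List.getElem_mem _)
  · rw [deg_flip]
    exact idx_ord t.1 d _
  · rintro ⟨⟨t, p⟩, hn', hp, hdeg⟩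
    have hp' : p ∈ (t.flipPath p).ordLeaves := by
      rw [(ord_perm _).mem_iff, flip_paths]; exact hp
    obtain ⟨j, hj, hjp⟩ := List.getElem_of_mem hp'
    have hidx : (t.flipPath p).idx ((t.flipPath p).ordLeaves[j]) = d := by
      rw [hjp, ← deg_flip, flipPath_flip_flip]; exact hdeg
    have hjd : j = d := by
      rw [idx_ord (t.flipPath p) j hj] at hidx
      exact hidx
    subst hjd
    simp only [Subtype.mk.injEq, Prod.mk.injEq]
    rw [hjp, flipPath_flip_flip]
    exact ⟨rfl, rfl⟩
  · rintro ⟨t, ht⟩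
    simp only [Subtype.mk.injEq]
    rw [flipPath_flip_flip]
end

section
/- Let U be the generating series of unlabeled rooted trees with no unary nodes counted by leaves, with radius of convergence ρ_u, 0 < ρ_u < 1, and let D(z) = exp(Σ_{r≥2} U(z^r)/r) - 1. Then D has radius of convergence exactly √ρ_u. -/
/-- Plane rooted trees with unlabeled leaves. -/
inductive Pl where
  | leaf : Pl
  | node : List Pl → Pl

def Pl.nLeaves : Pl → ℕ
  | .leaf => 1
  | .node ts => (ts.attach.map (fun x => Pl.nLeaves x.1)).sum
decreasing_by
  have := List.sizeOf_lt_of_mem x.2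
  simp only [Pl.node.sizeOf_spec]
  omega

/-- no unary (or nullary) internal nodes: every internal node has ≥ 2 children. -/
inductive Pl.Wf : Pl → Prop
  | leaf : Wf .leaf
  | node (ts : List Pl) (h2 : 2 ≤ ts.length) (hall : ∀ t ∈ ts, Wf t) : Wf (.node ts)

/-- `Sim t₁ t₂` : the plane trees `t₁` and `t₂` represent the same *non-plane*
tree, i.e. they agree up to permuting the children of each internal node. -/
inductive Pl.Sim : Pl → Pl → Prop
  | leaf : Sim .leaf .leaf
  | node (l₁ l₂ : List Pl) (h : l₁.length = l₂.length)
      (σ : Equiv.Perm (Fin l₁.length))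
      (hs : ∀ i : Fin l₁.length, Sim (l₁.get i) (l₂.get (Fin.cast h (σ i)))) :
      Sim (.node l₁) (.node l₂)

/-- `uCount n` : the number of rooted non-plane *unlabeled* trees with `n`
leaves and no unary nodes (isomorphism classes of plane trees). -/
noncomputable def uCount (n : ℕ) : ℕ :=
  Nat.card (Quot (fun a b : {t : Pl // t.Wf ∧ t.nLeaves = n} => Pl.Sim a.1 b.1))

/-- Coefficientwise definition of the composition `exp ∘ A` for a formal power
series `A` with zero constant term: `expComp A = Σ_{k≥0} A^k / k!`
(the sum is finite in each coefficient). -/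
noncomputable def expComp (A : PowerSeries ℚ) : PowerSeries ℚ :=
  PowerSeries.mk fun n =>
    ∑ k ∈ Finset.range (n + 1), (1 / (k.factorial : ℚ)) * PowerSeries.coeff n (A ^ k)

noncomputable def Aq : PowerSeries ℚ := PowerSeries.mk fun n =>
  ∑ r ∈ Finset.Icc 2 n, if r ∣ n then (1 / (r : ℚ)) * (uCount (n / r) : ℚ) else 0

lemma coeffA (n : ℕ) : PowerSeries.coeff n Aq =
    ∑ r ∈ Finset.Icc 2 n, if r ∣ n then (1 / (r : ℚ)) * (uCount (n / r) : ℚ) else 0 :=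
  PowerSeries.coeff_mk _ _

lemma coeffA_nonneg (n : ℕ) : 0 ≤ PowerSeries.coeff n Aq := by
  rw [coeffA]
  refine Finset.sum_nonneg fun r _ => ?_
  split <;> positivity

lemma coeffApow_nonneg (k n : ℕ) : 0 ≤ PowerSeries.coeff n (Aq ^ k) := by
  induction k generalizing n with
  | zero =>
    rw [pow_zero, PowerSeries.coeff_one]
    split <;> norm_num
  | succ k ih =>
    rw [pow_succ, PowerSeries.coeff_mul]
    exact Finset.sum_nonneg fun p _ => mul_nonneg (ih _) (coeffA_nonneg _)

lemma coeffD (n : ℕ) : PowerSeries.coeff n (expComp Aq - 1) =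
    (∑ k ∈ Finset.range (n + 1),
      (1 / (k.factorial : ℚ)) * PowerSeries.coeff n (Aq ^ k)) -
    (if n = 0 then 1 else 0) := by
  rw [map_sub, expComp, PowerSeries.coeff_mk, PowerSeries.coeff_one]

lemma coeffD_nonneg (n : ℕ) : 0 ≤ PowerSeries.coeff n (expComp Aq - 1) := by
  rw [coeffD]
  rcases Nat.eq_zero_or_pos n with h | h
  · subst h; simp
  · rw [if_neg h.ne', sub_zero]
    exact Finset.sum_nonneg fun k _ => mul_nonneg (by positivity) (coeffApow_nonneg _ _)

lemma coeffD_ge (n : ℕ) (hn : 1 ≤ n) :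
    PowerSeries.coeff n Aq ≤ PowerSeries.coeff n (expComp Aq - 1) := by
  rw [coeffD, if_neg (by omega), sub_zero]
  have h := Finset.single_le_sum
    (f := fun k => (1 / (k.factorial : ℚ)) * PowerSeries.coeff n (Aq ^ k))
    (fun k _ => mul_nonneg (by positivity) (coeffApow_nonneg _ _))
    (show 1 ∈ Finset.range (n + 1) by simp; omega)
  simpa using h

lemma A_lower (m : ℕ) :
    (1 / 2 : ℚ) * (uCount (m + 1) : ℚ) ≤ PowerSeries.coeff (2 * m + 2) Aq := by
  rw [coeffA]
  have h2 : (2 : ℕ) ∈ Finset.Icc 2 (2 * m + 2) := by simp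
  have hdvd : (2 : ℕ) ∣ 2 * m + 2 := ⟨m + 1, by ring⟩
  have := Finset.single_le_sum
    (f := fun r => if r ∣ 2 * m + 2 then (1 / (r : ℚ)) * (uCount ((2 * m + 2) / r) : ℚ) else 0)
    (fun r _ => by split <;> positivity) h2
  rw [if_pos hdvd, show (2 * m + 2) / 2 = m + 1 from by omega] at this
  exact_mod_cast this

set_option maxHeartbeats 800000 in
lemma summable_Aseries (x : ℝ) (hx0 : 0 ≤ x) (hx1 : x < 1)
    (hu_sum : Summable fun m => (uCount m : ℝ) * (x ^ 2) ^ m) :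
    Summable fun n => ((PowerSeries.coeff n Aq : ℚ) : ℝ) * x ^ n := by
  have hgeo : Summable (fun s : ℕ => x ^ s) := summable_geometric_of_lt_one hx0 hx1
  have hg : Summable (fun p : ℕ × ℕ => x ^ p.1 * ((uCount p.2 : ℝ) * (x ^ 2) ^ p.2)) :=
    hgeo.mul_of_nonneg hu_sum (fun s => pow_nonneg hx0 s)
      (fun m => mul_nonneg (Nat.cast_nonneg _) (pow_nonneg (sq_nonneg x) m))
  have aR_nonneg : ∀ n, 0 ≤ ((PowerSeries.coeff n Aq : ℚ) : ℝ) * x ^ n := fun n =>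
    mul_nonneg (by exact_mod_cast coeffA_nonneg n) (pow_nonneg hx0 n)
  -- partial sums of the A-series are bounded
  have key : ∀ N, ∑ n ∈ Finset.range N, ((PowerSeries.coeff n Aq : ℚ) : ℝ) * x ^ n ≤
      ∑' p : ℕ × ℕ, x ^ p.1 * ((uCount p.2 : ℝ) * (x ^ 2) ^ p.2) := by
    intro N
    have hrew : ∀ n, ((PowerSeries.coeff n Aq : ℚ) : ℝ) * x ^ n =
        ∑ r ∈ Finset.Icc 2 n,
          (if r ∣ n then (1 / (r : ℝ)) * (uCount (n / r) : ℝ) else 0) * x ^ n := by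
      intro n
      rw [coeffA, Rat.cast_sum, Finset.sum_mul]
      refine Finset.sum_congr rfl fun r hr => ?_
      split_ifs with h <;> push_cast <;> ring
    calc ∑ n ∈ Finset.range N, ((PowerSeries.coeff n Aq : ℚ) : ℝ) * x ^ n
        = ∑ p ∈ (Finset.range N).sigma (fun n => Finset.Icc 2 n),
            (if p.2 ∣ p.1 then (1 / (p.2 : ℝ)) * (uCount (p.1 / p.2) : ℝ) else 0) * x ^ p.1 := by
          simp only [hrew]
          rw [Finset.sum_sigma']
      _ = ∑ p ∈ ((Finset.range N).sigma (fun n => Finset.Icc 2 n)).filter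
            (fun p => p.2 ∣ p.1),
            (if p.2 ∣ p.1 then (1 / (p.2 : ℝ)) * (uCount (p.1 / p.2) : ℝ) else 0) * x ^ p.1 := by
          refine (Finset.sum_filter_of_ne fun p _ hne => ?_).symm
          by_contra h
          exact hne (by rw [if_neg h, zero_mul])
      _ ≤ ∑ p ∈ ((Finset.range N).sigma (fun n => Finset.Icc 2 n)).filter
            (fun p => p.2 ∣ p.1),
            x ^ (p.2 - 2) * ((uCount (p.1 / p.2) : ℝ) * (x ^ 2) ^ (p.1 / p.2)) := by
          refine Finset.sum_le_sum fun p hp => ?_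
          obtain ⟨n, r⟩ := p
          simp only [Finset.mem_filter, Finset.mem_sigma, Finset.mem_range,
            Finset.mem_Icc] at hp
          obtain ⟨⟨hnN, h2r, hrn⟩, hdvd⟩ := hp
          rw [if_pos hdvd]
          set m := n / r with hm
          have hmn : r * m = n := Nat.mul_div_cancel' hdvd
          have hm1 : 1 ≤ m := (Nat.one_le_div_iff (by omega)).mpr hrn
          have hexp : r - 2 + 2 * m ≤ n := by
            have h1 : r - 2 ≤ (r - 2) * m := Nat.le_mul_of_pos_right _ (by omega)
            have h2 : (r - 2) * m + 2 * m = r * m := by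
              rw [← Nat.add_mul]
              congr 1
              omega
            omega
          have hpow : x ^ n ≤ x ^ (r - 2 + 2 * m) :=
            pow_le_pow_of_le_one hx0 hx1.le hexp
          have hr1 : (1 : ℝ) / (r : ℝ) ≤ 1 := by
            rw [div_le_one (by positivity)]
            exact_mod_cast (by omega : 1 ≤ r)
          calc (1 / (r : ℝ)) * (uCount m : ℝ) * x ^ n
              ≤ 1 * (uCount m : ℝ) * x ^ (r - 2 + 2 * m) := by
                apply mul_le_mul (mul_le_mul hr1 le_rfl (Nat.cast_nonneg _) one_pos.le)
                  hpow (pow_nonneg hx0 _)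
                positivity
            _ = x ^ (r - 2) * ((uCount m : ℝ) * (x ^ 2) ^ m) := by
                rw [pow_add, ← pow_mul]
                ring
      _ = ∑ q ∈ (((Finset.range N).sigma (fun n => Finset.Icc 2 n)).filter
            (fun p => p.2 ∣ p.1)).image (fun p => (p.2 - 2, p.1 / p.2)),
            x ^ q.1 * ((uCount q.2 : ℝ) * (x ^ 2) ^ q.2) := by
          rw [Finset.sum_image]
          intro p hp q hq hpq
          simp only [Finset.mem_coe, Finset.mem_filter, Finset.mem_sigma, Finset.mem_range,
            Finset.mem_Icc] at hp hq
          obtain ⟨⟨_, h2p, hpn⟩, hpd⟩ := hp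
          obtain ⟨⟨_, h2q, hqn⟩, hqd⟩ := hq
          have h1 : p.2 - 2 = q.2 - 2 := congrArg Prod.fst hpq
          have h2 : p.1 / p.2 = q.1 / q.2 := congrArg Prod.snd hpq
          have hr : p.2 = q.2 := by omega
          have hn : p.1 = q.1 := by
            have e1 : p.2 * (p.1 / p.2) = p.1 := Nat.mul_div_cancel' hpd
            have e2 : q.2 * (q.1 / q.2) = q.1 := Nat.mul_div_cancel' hqd
            rw [← e1, ← e2, h2, hr]
          exact Sigma.ext hn (by rw [hr])
      _ ≤ ∑' p : ℕ × ℕ, x ^ p.1 * ((uCount p.2 : ℝ) * (x ^ 2) ^ p.2) := by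
          refine Summable.sum_le_tsum _ (fun p _ => ?_) hg
          positivity
  exact summable_of_sum_range_le aR_nonneg key

set_option maxHeartbeats 800000 in
lemma summable_powk (x : ℝ) (hx0 : 0 ≤ x)
    (hSa : Summable fun n => ((PowerSeries.coeff n Aq : ℚ) : ℝ) * x ^ n) :
    ∀ k : ℕ,
      Summable (fun n => ((PowerSeries.coeff n (Aq ^ k) : ℚ) : ℝ) * x ^ n) ∧
      ∑' n, ((PowerSeries.coeff n (Aq ^ k) : ℚ) : ℝ) * x ^ n ≤
        (∑' n, ((PowerSeries.coeff n Aq : ℚ) : ℝ) * x ^ n) ^ k := by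
  have aR_nonneg : ∀ n, 0 ≤ ((PowerSeries.coeff n Aq : ℚ) : ℝ) * x ^ n := fun n =>
    mul_nonneg (by exact_mod_cast coeffA_nonneg n) (pow_nonneg hx0 n)
  set Ca : ℝ := ∑' n, ((PowerSeries.coeff n Aq : ℚ) : ℝ) * x ^ n with hCa
  have hCa0 : 0 ≤ Ca := tsum_nonneg aR_nonneg
  -- powers of A
  have hpowk : ∀ k : ℕ,
      Summable (fun n => ((PowerSeries.coeff n (Aq ^ k) : ℚ) : ℝ) * x ^ n) ∧
      ∑' n, ((PowerSeries.coeff n (Aq ^ k) : ℚ) : ℝ) * x ^ n ≤ Ca ^ k := by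
    intro k
    induction k with
    | zero =>
      have heq : (fun n => ((PowerSeries.coeff n (Aq ^ 0) : ℚ) : ℝ) * x ^ n)
          = fun n => if n = 0 then (1 : ℝ) else 0 := by
        funext n
        rw [pow_zero, PowerSeries.coeff_one]
        split_ifs with h
        · subst h; norm_num
        · norm_num
      rw [heq, pow_zero]
      constructor
      · exact summable_of_ne_finset_zero (s := {0}) fun n hn =>
          if_neg (by simpa using hn)
      · rw [tsum_eq_single 0 fun b hb => if_neg hb]
        simp
    | succ k ih =>
      obtain ⟨hsum, hle⟩ := ih
      have hprod : Summable (fun p : ℕ × ℕ =>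
          (((PowerSeries.coeff p.1 (Aq ^ k) : ℚ) : ℝ) * x ^ p.1) *
          (((PowerSeries.coeff p.2 Aq : ℚ) : ℝ) * x ^ p.2)) :=
        hsum.mul_of_nonneg hSa
          (fun n => mul_nonneg (by show (0:ℝ) ≤ _; exact_mod_cast coeffApow_nonneg k n) (pow_nonneg hx0 n))
          aR_nonneg
      have heq : (fun n => ((PowerSeries.coeff n (Aq ^ (k + 1)) : ℚ) : ℝ) * x ^ n)
          = fun n => ∑ kl ∈ Finset.HasAntidiagonal.antidiagonal n,
              (((PowerSeries.coeff kl.1 (Aq ^ k) : ℚ) : ℝ) * x ^ kl.1) *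
              (((PowerSeries.coeff kl.2 Aq : ℚ) : ℝ) * x ^ kl.2) := by
        funext n
        rw [pow_succ, PowerSeries.coeff_mul, Rat.cast_sum, Finset.sum_mul]
        refine Finset.sum_congr rfl fun kl hkl => ?_
        have hkln : kl.1 + kl.2 = n := Finset.HasAntidiagonal.mem_antidiagonal.mp hkl
        push_cast
        rw [← hkln, pow_add]
        ring
      rw [heq]
      constructor
      · exact summable_sum_mul_antidiagonal_of_summable_mul
          (f := fun i => ((PowerSeries.coeff i (Aq ^ k) : ℚ) : ℝ) * x ^ i)
          (g := fun j => ((PowerSeries.coeff j Aq : ℚ) : ℝ) * x ^ j) hprod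
      · rw [← Summable.tsum_mul_tsum_eq_tsum_sum_antidiagonal
          (f := fun i => ((PowerSeries.coeff i (Aq ^ k) : ℚ) : ℝ) * x ^ i)
          (g := fun j => ((PowerSeries.coeff j Aq : ℚ) : ℝ) * x ^ j) hsum hSa hprod, pow_succ]
        exact mul_le_mul hle le_rfl (tsum_nonneg aR_nonneg) (pow_nonneg hCa0 k)
  exact hpowk

set_option maxHeartbeats 800000 in
lemma summable_Dseries (x : ℝ) (hx0 : 0 ≤ x) (hx1 : x < 1)
    (hu_sum : Summable fun m => (uCount m : ℝ) * (x ^ 2) ^ m) :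
    Summable fun n => ((PowerSeries.coeff n (expComp Aq - 1) : ℚ) : ℝ) * x ^ n := by
  have hSa : Summable fun n => ((PowerSeries.coeff n Aq : ℚ) : ℝ) * x ^ n :=
    summable_Aseries x hx0 hx1 hu_sum
  have aR_nonneg : ∀ n, 0 ≤ ((PowerSeries.coeff n Aq : ℚ) : ℝ) * x ^ n := fun n =>
    mul_nonneg (by exact_mod_cast coeffA_nonneg n) (pow_nonneg hx0 n)
  set Ca : ℝ := ∑' n, ((PowerSeries.coeff n Aq : ℚ) : ℝ) * x ^ n with hCa
  have hCa0 : 0 ≤ Ca := tsum_nonneg aR_nonneg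
  have hpowk := summable_powk x hx0 hSa
  -- the D series
  have f_nonneg : ∀ n, 0 ≤ ((PowerSeries.coeff n (expComp Aq - 1) : ℚ) : ℝ) * x ^ n :=
    fun n => mul_nonneg (by exact_mod_cast coeffD_nonneg n) (pow_nonneg hx0 n)
  have hD : ∀ n, ((PowerSeries.coeff n (expComp Aq - 1) : ℚ) : ℝ) * x ^ n ≤
      ∑ k ∈ Finset.range (n + 1),
        (1 / (k.factorial : ℝ)) * (((PowerSeries.coeff n (Aq ^ k) : ℚ) : ℝ) * x ^ n) := by
    intro n
    have h1 : (PowerSeries.coeff n (expComp Aq - 1)) ≤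
        ∑ k ∈ Finset.range (n + 1),
          (1 / (k.factorial : ℚ)) * PowerSeries.coeff n (Aq ^ k) := by
      rw [coeffD]
      have : (0 : ℚ) ≤ (if n = 0 then 1 else 0) := by split <;> norm_num
      linarith
    have h1' : ((PowerSeries.coeff n (expComp Aq - 1) : ℚ) : ℝ) ≤
        ∑ k ∈ Finset.range (n + 1),
          (1 / (k.factorial : ℝ)) * ((PowerSeries.coeff n (Aq ^ k) : ℚ) : ℝ) := by
      have : ((PowerSeries.coeff n (expComp Aq - 1) : ℚ) : ℝ) ≤ ((_ : ℚ) : ℝ) :=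
        (Rat.cast_le (K := ℝ)).mpr h1
      rw [Rat.cast_sum] at this
      convert this using 2 with k
      push_cast
      ring
    calc ((PowerSeries.coeff n (expComp Aq - 1) : ℚ) : ℝ) * x ^ n
        ≤ (∑ k ∈ Finset.range (n + 1),
            (1 / (k.factorial : ℝ)) * ((PowerSeries.coeff n (Aq ^ k) : ℚ) : ℝ)) * x ^ n :=
          mul_le_mul_of_nonneg_right h1' (pow_nonneg hx0 n)
      _ = _ := by rw [Finset.sum_mul]; refine Finset.sum_congr rfl fun k _ => by ring
  have q_nonneg : ∀ k n : ℕ, 0 ≤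
      (1 / (k.factorial : ℝ)) * (((PowerSeries.coeff n (Aq ^ k) : ℚ) : ℝ) * x ^ n) :=
    fun k n => mul_nonneg (by positivity)
      (mul_nonneg (by exact_mod_cast coeffApow_nonneg k n) (pow_nonneg hx0 n))
  have key2 : ∀ N, ∑ n ∈ Finset.range N,
      ((PowerSeries.coeff n (expComp Aq - 1) : ℚ) : ℝ) * x ^ n ≤ Real.exp Ca := by
    intro N
    calc ∑ n ∈ Finset.range N, ((PowerSeries.coeff n (expComp Aq - 1) : ℚ) : ℝ) * x ^ n
        ≤ ∑ n ∈ Finset.range N, ∑ k ∈ Finset.range (n + 1),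
            (1 / (k.factorial : ℝ)) * (((PowerSeries.coeff n (Aq ^ k) : ℚ) : ℝ) * x ^ n) :=
          Finset.sum_le_sum fun n _ => hD n
      _ ≤ ∑ n ∈ Finset.range N, ∑ k ∈ Finset.range N,
            (1 / (k.factorial : ℝ)) * (((PowerSeries.coeff n (Aq ^ k) : ℚ) : ℝ) * x ^ n) := by
          refine Finset.sum_le_sum fun n hn => ?_
          refine Finset.sum_le_sum_of_subset_of_nonneg
            (Finset.range_subset_range.mpr (by simp at hn; omega)) fun k _ _ => q_nonneg k n
      _ = ∑ k ∈ Finset.range N, ∑ n ∈ Finset.range N,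
            (1 / (k.factorial : ℝ)) * (((PowerSeries.coeff n (Aq ^ k) : ℚ) : ℝ) * x ^ n) :=
          Finset.sum_comm
      _ ≤ ∑ k ∈ Finset.range N, Ca ^ k / k.factorial := by
          refine Finset.sum_le_sum fun k _ => ?_
          rw [← Finset.mul_sum]
          have hs := Summable.sum_le_tsum (Finset.range N)
            (fun n _ => mul_nonneg (by exact_mod_cast coeffApow_nonneg k n)
              (pow_nonneg hx0 n)) (hpowk k).1
          have := hs.trans (hpowk k).2
          calc (1 / (k.factorial : ℝ)) * ∑ n ∈ Finset.range N,
                ((PowerSeries.coeff n (Aq ^ k) : ℚ) : ℝ) * x ^ n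
              ≤ (1 / (k.factorial : ℝ)) * Ca ^ k :=
                mul_le_mul_of_nonneg_left this (by positivity)
            _ = Ca ^ k / k.factorial := by ring
      _ ≤ Real.exp Ca := Real.sum_le_exp_of_nonneg hCa0 N
  exact summable_of_sum_range_le f_nonneg key2

/-- Let `U` be the generating series of unlabeled rooted trees with no unary
nodes counted by leaves, with radius of convergence `ρᵤ ∈ (0,1)`, and let
`D(z) = exp(Σ_{r≥2} U(z^r)/r) - 1`.  Then `D` has radius of convergence exactly
`√ρᵤ`.  (All coefficients are nonnegative, so the radius is detected on the
positive real axis.) -/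
theorem stmt17 (ρu : ℝ) (h0 : 0 < ρu) (h1 : ρu < 1)
    (hrad1 : ∀ x : ℝ, 0 ≤ x → x < ρu → Summable (fun n => (uCount n : ℝ) * x ^ n))
    (hrad2 : ∀ x : ℝ, ρu < x → ¬ Summable (fun n => (uCount n : ℝ) * x ^ n)) :
    letI A : PowerSeries ℚ := PowerSeries.mk fun n =>
      ∑ r ∈ Finset.Icc 2 n, if r ∣ n then (1 / (r : ℚ)) * (uCount (n / r) : ℚ) else 0
    letI D : PowerSeries ℚ := expComp A - 1
    (∀ x : ℝ, 0 ≤ x → x < Real.sqrt ρu →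
      Summable (fun n => ((PowerSeries.coeff n D : ℚ) : ℝ) * x ^ n)) ∧
    (∀ x : ℝ, Real.sqrt ρu < x →
      ¬ Summable (fun n => ((PowerSeries.coeff n D : ℚ) : ℝ) * x ^ n)) := by
  constructor
  · -- convergence for `x < √ρu`
    intro x hx0 hx
    show Summable fun n => ((PowerSeries.coeff n (expComp Aq - 1) : ℚ) : ℝ) * x ^ n
    have hsq1 : Real.sqrt ρu < 1 := by
      have := Real.sqrt_lt_sqrt h0.le h1
      simpa [Real.sqrt_one] using this
    have hx1 : x < 1 := hx.trans hsq1
    have hx2 : x ^ 2 < ρu := by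
      have h := pow_lt_pow_left₀ hx hx0 two_ne_zero
      rwa [Real.sq_sqrt h0.le] at h
    have hu_sum : Summable (fun m => (uCount m : ℝ) * (x ^ 2) ^ m) :=
      hrad1 _ (sq_nonneg x) hx2
    exact summable_Dseries x hx0 hx1 hu_sum
  · -- divergence for `x > √ρu`
    intro x hx hs
    have hs' : Summable fun n =>
        ((PowerSeries.coeff n (expComp Aq - 1) : ℚ) : ℝ) * x ^ n := hs
    have hx0 : 0 < x := (Real.sqrt_pos.mpr h0).trans hx
    have hρ : ρu < x ^ 2 := by
      have h := pow_lt_pow_left₀ hx (Real.sqrt_nonneg _) two_ne_zero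
      rwa [Real.sq_sqrt h0.le] at h
    have hinj : Function.Injective (fun m : ℕ => 2 * m + 2) := fun a b hab => by
      simp only [] at hab; omega
    have hg : Summable fun m =>
        ((PowerSeries.coeff (2 * m + 2) (expComp Aq - 1) : ℚ) : ℝ) * x ^ (2 * m + 2) :=
      hs'.comp_injective hinj
    have hbound : ∀ m, (uCount (m + 1) : ℝ) * (x ^ 2) ^ (m + 1) ≤
        2 * (((PowerSeries.coeff (2 * m + 2) (expComp Aq - 1) : ℚ) : ℝ) * x ^ (2 * m + 2)) := by
      intro m
      have h1 : (1 / 2 : ℚ) * (uCount (m + 1) : ℚ) ≤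
          PowerSeries.coeff (2 * m + 2) (expComp Aq - 1) :=
        (A_lower m).trans (coeffD_ge _ (by omega))
      have h1' : (1 / 2 : ℝ) * (uCount (m + 1) : ℝ) ≤
          ((PowerSeries.coeff (2 * m + 2) (expComp Aq - 1) : ℚ) : ℝ) := by
        have h2 := (Rat.cast_le (K := ℝ)).mpr h1
        push_cast at h2
        exact h2
      have h2 : (x ^ 2) ^ (m + 1) = x ^ (2 * m + 2) := by
        rw [← pow_mul, show 2 * (m + 1) = 2 * m + 2 from by ring]
      rw [h2]
      have := mul_le_mul_of_nonneg_right h1' (pow_nonneg hx0.le (2 * m + 2))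
      linarith
    have hsum1 : Summable fun m => (uCount (m + 1) : ℝ) * (x ^ 2) ^ (m + 1) :=
      Summable.of_nonneg_of_le (fun m => by positivity) hbound (hg.mul_left 2)
    have hsum0 : Summable fun m => (uCount m : ℝ) * (x ^ 2) ^ m :=
      (summable_nat_add_iff (f := fun m => (uCount m : ℝ) * (x ^ 2) ^ m) 1).mp hsum1
    exact hrad2 (x ^ 2) hρ hsum0
end
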